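/- Let (X, μ) be a measure space, let p > 1 be a real number, and let f, g : X → ℝ be measurable functions with ∫ |f|^p dμ < ∞ and ∫ |g|^p dμ < ∞. If ∫ |f|^(p-1)·sgn(f)·g dμ = ∫ |f|^p dμ and ∫ |g|^(p-1)·sgn(g)·f dμ = ∫ |g|^p dμ, then f = g μ-almost everywhere. -/
import Mathlib


open MeasureTheory

noncomputable def phi' (p : ℝ) (t : ℝ) : ℝ := |t| ^ (p - 1) * Real.sign t

lemma measurable_phi' (p : ℝ) : Measurable (phi' p) := by
  unfold phi'
  apply Measurable.mul
  · exact (measurable_id.abs).pow_const _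
  · unfold Real.sign
    exact Measurable.ite (measurableSet_lt measurable_id measurable_const)
      measurable_const
      (Measurable.ite (measurableSet_lt measurable_const measurable_id)
        measurable_const measurable_const)

lemma phi'_mul_self (p : ℝ) (hp : 1 < p) (a : ℝ) : phi' p a * a = |a| ^ p := by
  unfold phi'
  rcases eq_or_ne a 0 with h | h
  · simp [h, Real.zero_rpow (by linarith : p ≠ 0), Real.zero_rpow (by linarith : p - 1 ≠ 0)]
  · rw [mul_assoc]
    have hs : Real.sign a * a = |a| := by
      rcases lt_or_gt_of_ne h with h' | h'
      · rw [Real.sign_of_neg h', abs_of_neg h']; ring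
      · rw [Real.sign_of_pos h', abs_of_pos h']; ring
    rw [hs]
    nth_rewrite 2 [← Real.rpow_one |a|]
    rw [← Real.rpow_add (abs_pos.mpr h)]
    norm_num

lemma phi'_strictMono (p : ℝ) (hp : 1 < p) : StrictMono (phi' p) := by
  have hp1 : 0 < p - 1 := by linarith
  intro a b hab
  unfold phi'
  rcases lt_trichotomy a 0 with ha | ha | ha
  · rcases lt_trichotomy b 0 with hb | hb | hb
    · rw [Real.sign_of_neg ha, Real.sign_of_neg hb, abs_of_neg ha, abs_of_neg hb]
      have : (-b) ^ (p-1) < (-a) ^ (p-1) :=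
        Real.rpow_lt_rpow (by linarith) (by linarith) hp1
      nlinarith [Real.rpow_pos_of_pos (show (0:ℝ) < -b by linarith) (p-1)]
    · subst hb
      rw [Real.sign_of_neg ha, Real.sign_zero]
      have := Real.rpow_pos_of_pos (show (0:ℝ) < -a by linarith) (p-1)
      rw [abs_of_neg ha]
      nlinarith
    · rw [Real.sign_of_neg ha, Real.sign_of_pos hb]
      have h1 := Real.rpow_pos_of_pos (show (0:ℝ) < -a by linarith) (p-1)
      have h2 := Real.rpow_pos_of_pos hb (p-1)
      rw [abs_of_neg ha, abs_of_pos hb]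
      nlinarith
  · subst ha
    have hb : 0 < b := hab
    rw [Real.sign_zero, Real.sign_of_pos hb, abs_of_pos hb]
    have := Real.rpow_pos_of_pos hb (p-1)
    nlinarith
  · have hb : 0 < b := lt_trans ha hab
    rw [Real.sign_of_pos ha, Real.sign_of_pos hb, abs_of_pos ha, abs_of_pos hb]
    have : a ^ (p-1) < b ^ (p-1) := Real.rpow_lt_rpow (le_of_lt ha) hab hp1
    nlinarith

lemma phi'_pair_nonneg (p : ℝ) (hp : 1 < p) (a b : ℝ) :
    0 ≤ (phi' p a - phi' p b) * (a - b) := by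
  rcases lt_trichotomy a b with h | h | h
  · have := phi'_strictMono p hp h
    nlinarith
  · simp [h]
  · have := phi'_strictMono p hp h
    nlinarith

lemma phi'_pair_eq_zero (p : ℝ) (hp : 1 < p) (a b : ℝ)
    (h : (phi' p a - phi' p b) * (a - b) = 0) : a = b := by
  by_contra hne
  rcases lt_or_gt_of_ne hne with h' | h'
  · have := phi'_strictMono p hp h'
    nlinarith
  · have := phi'_strictMono p hp h'
    nlinarith

/-- If the two cross-pairings of the nonlinear stabilizer equal the respective
`L^p` energies, then `f = g` almost everywhere. -/
theorem ae_eq_of_cross_pairings {X : Type*} [MeasurableSpace X] (μ : Measure X)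
    (p : ℝ) (hp : 1 < p) (f g : X → ℝ)
    (hf : Measurable f) (hg : Measurable g)
    (hfp : Integrable (fun x => |f x| ^ p) μ)
    (hgp : Integrable (fun x => |g x| ^ p) μ)
    (h1 : ∫ x, |f x| ^ (p - 1) * Real.sign (f x) * g x ∂μ = ∫ x, |f x| ^ p ∂μ)
    (h2 : ∫ x, |g x| ^ (p - 1) * Real.sign (g x) * f x ∂μ = ∫ x, |g x| ^ p ∂μ) :
    f =ᵐ[μ] g := by
  set q : ℝ := p / (p - 1) with hq
  have hpq : p.HolderConjugate q := Real.HolderConjugate.conjExponent hp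
  -- integrability of cross terms
  have cross_int : ∀ (u v : X → ℝ), Measurable u → Measurable v →
      Integrable (fun x => |u x| ^ p) μ → Integrable (fun x => |v x| ^ p) μ →
      Integrable (fun x => phi' p (u x) * v x) μ := by
    intro u v hu hv hup hvp
    have hmeas : Measurable fun x => phi' p (u x) * v x :=
      ((measurable_phi' p).comp hu).mul hv
    apply Integrable.mono' (g := fun x => |u x| ^ p / q + |v x| ^ p / p)
    · exact (hup.div_const q).add (hvp.div_const p)
    · exact hmeas.aestronglyMeasurable
    · refine Filter.Eventually.of_forall fun x => ?_
      have hb : |phi' p (u x) * v x| ≤ |u x| ^ (p - 1) * |v x| := by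
        rw [abs_mul]
        unfold phi'
        rw [abs_mul, abs_of_nonneg (Real.rpow_nonneg (abs_nonneg _) _)]
        gcongr
        rcases Real.sign_apply_eq (u x) with h | h | h <;> simp [h, Real.rpow_nonneg (abs_nonneg _)]
      refine hb.trans ?_
      have := Real.young_inequality_of_nonneg
        (Real.rpow_nonneg (abs_nonneg (u x)) (p-1)) (abs_nonneg (v x)) hpq.symm
      calc |u x| ^ (p-1) * |v x| ≤ (|u x| ^ (p-1)) ^ q / q + |v x| ^ p / p := this
        _ = |u x| ^ p / q + |v x| ^ p / p := by
            rw [← Real.rpow_mul (abs_nonneg _), hpq.sub_one_mul_conj]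
  have hint1 : Integrable (fun x => phi' p (f x) * g x) μ := cross_int f g hf hg hfp hgp
  have hint2 : Integrable (fun x => phi' p (g x) * f x) μ := cross_int g f hg hf hgp hfp
  set h : X → ℝ := fun x => (phi' p (f x) - phi' p (g x)) * (f x - g x) with hh
  have hrepr : ∀ x, h x = (|f x| ^ p + |g x| ^ p) - (phi' p (f x) * g x + phi' p (g x) * f x) := by
    intro x
    simp only [hh]
    rw [← phi'_mul_self p hp (f x), ← phi'_mul_self p hp (g x)]
    ring
  have hinth : Integrable h μ := by
    apply Integrable.congr ((hfp.add hgp).sub (hint1.add hint2))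
    exact Filter.Eventually.of_forall fun x => (hrepr x).symm
  have h1' : ∫ x, phi' p (f x) * g x ∂μ = ∫ x, |f x| ^ p ∂μ := by
    rw [← h1]; congr 1
  have h2' : ∫ x, phi' p (g x) * f x ∂μ = ∫ x, |g x| ^ p ∂μ := by
    rw [← h2]; congr 1
  have hintzero : ∫ x, h x ∂μ = 0 := by
    calc ∫ x, h x ∂μ
        = ∫ x, ((|f x| ^ p + |g x| ^ p) - (phi' p (f x) * g x + phi' p (g x) * f x)) ∂μ := by
          exact integral_congr_ae (Filter.Eventually.of_forall hrepr)
      _ = (∫ x, (|f x| ^ p + |g x| ^ p) ∂μ) - ∫ x, (phi' p (f x) * g x + phi' p (g x) * f x) ∂μ :=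
          integral_sub (hfp.add hgp) (hint1.add hint2)
      _ = ((∫ x, |f x| ^ p ∂μ) + ∫ x, |g x| ^ p ∂μ)
          - ((∫ x, phi' p (f x) * g x ∂μ) + ∫ x, phi' p (g x) * f x ∂μ) := by
          rw [integral_add hfp hgp, integral_add hint1 hint2]
      _ = 0 := by rw [h1', h2']; ring
  have hnonneg : 0 ≤ᵐ[μ] h :=
    Filter.Eventually.of_forall fun x => phi'_pair_nonneg p hp (f x) (g x)
  have hzero : h =ᵐ[μ] 0 :=
    ((integral_eq_zero_iff_of_nonneg_ae hnonneg hinth).mp hintzero)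
  filter_upwards [hzero] with x hx
  exact phi'_pair_eq_zero p hp (f x) (g x) hx
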